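/- Let T and U be trees, each with n vertices, such that N_λ(T) = N_λ(U) for every partition λ of n (equivalently, X_T = X_U). Then T and U have the same degree sequence: for every j ≥ 0, the number of vertices of T of degree j equals the number of vertices of U of degree j. -/

import Mathlib

open SimpleGraph Finset

variable {V : Type*} {W : Type*}

open Classical in
/-- `edgeSetType A` : the "type" of the edge set `A`, i.e. the partition (as a multiset of
positive integers) of `#V` whose parts are the orders of the connected components of the
spanning subgraph `(V, A)`. -/
noncomputable def edgeSetType [Fintype V] (A : Finset (Sym2 V)) : Multiset ℕ :=
  ((Finset.univ : Finset V).image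
    (fun v => (SimpleGraph.fromEdgeSet (↑A : Set (Sym2 V))).connectedComponentMk v)).val.map
    (fun c => c.supp.ncard)

open Classical in
/-- `cCoeff G λ = Σ_{A ⊆ E(G), type(A) = λ} (−1)^{#A}`, the coefficient of the power-sum
symmetric function `p_λ` in the chromatic symmetric function `X_G`. -/
noncomputable def cCoeff [Fintype V] (G : SimpleGraph V) (lam : Multiset ℕ) : ℤ :=
  ∑ A ∈ (Finset.univ : Finset (Sym2 V)).powerset,
    if (↑A : Set (Sym2 V)) ⊆ G.edgeSet ∧ edgeSetType A = lam then (-1 : ℤ) ^ A.card else 0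

open Classical in
/-- `NCoeff G λ` : the number of edge sets `A ⊆ E(G)` with `type(A) = λ`. -/
noncomputable def NCoeff [Fintype V] (G : SimpleGraph V) (lam : Multiset ℕ) : ℕ :=
  ((Finset.univ : Finset (Sym2 V)).powerset.filter
    (fun (A : Finset (Sym2 V)) => (↑A : Set (Sym2 V)) ⊆ G.edgeSet ∧ edgeSetType A = lam)).card

/-!
For a forest `T` on `n` vertices, an edge set `A ⊆ E(T)` has `|A| = n - ℓ(type A)`, and the
isolated vertices of `(V, A)` are exactly the parts of `type A` equal to `1`. Hence, for each `k`,
the number of pairs `(A, v)` with `|A| = k` and `v` isolated in `(V, A)` is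
`∑_λ N_λ(T) [ℓ(λ) = n - k] m₁(λ)`, which is determined by the `N_λ`. Counted by `v` instead, it is
`∑_v C(n - 1 - deg v, k)`, since `v` is isolated exactly when `A` avoids the `deg v` edges at `v`.
Knowing `∑_v C(m_v, k)` for all `k` means knowing `∑_v (X + 1) ^ m_v`, hence `∑_v X ^ m_v`, hence
the multiset of the `m_v = n - 1 - deg v`.
-/

open Polynomial in
theorem Finset.card_filter_eq_of_sum_choose_eq {ι κ : Type*} [Fintype ι] [Fintype κ]
    (f : ι → ℕ) (g : κ → ℕ) (h : ∀ k, ∑ i, (f i).choose k = ∑ j, (g j).choose k) (m : ℕ) :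
    #{i | f i = m} = #{j | g j = m} := by
  have hbinom : ∑ i, (X + 1 : ℤ[X]) ^ f i = ∑ j, (X + 1 : ℤ[X]) ^ g j := by
    ext k
    simp only [finsetSum_coeff, coeff_X_add_one_pow]
    exact_mod_cast h k
  have hpow : ∑ i, (X : ℤ[X]) ^ f i = ∑ j, (X : ℤ[X]) ^ g j := by
    have := congrArg (·.comp (X - 1)) hbinom
    simpa only [Polynomial.sum_comp, pow_comp, add_comp, X_comp, one_comp, sub_add_cancel]
      using this
  simpa [finsetSum_coeff, coeff_X_pow, eq_comm] using congrArg (·.coeff m) hpow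

namespace SimpleGraph

variable {G : SimpleGraph V} {u v x y : V}

lemma Reachable.eq_of_forall_adj {β : Sort*} (φ : V → β) (hφ : ∀ a b, G.Adj a b → φ a = φ b)
    (h : G.Reachable x y) : φ x = φ y := by
  obtain ⟨p⟩ := h
  induction p with
  | nil => rfl
  | cons ha _ ih => exact (hφ _ _ ha).trans ih

lemma natCard_connectedComponent_sup_edge [Finite V] (h : ¬G.Reachable u v) :
    Nat.card (G ⊔ edge u v).ConnectedComponent + 1 = Nat.card G.ConnectedComponent := by
  classical
  have huv : u ≠ v := by rintro rfl; exact h .rfl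
  set f := ConnectedComponent.map (Hom.ofLE (le_sup_left : G ≤ G ⊔ edge u v))
  have hf : ∀ x, f (G.connectedComponentMk x) = (G ⊔ edge u v).connectedComponentMk x :=
    fun _ => rfl
  -- Merging the component of `v` into that of `u` is constant along edges of `G ⊔ edge u v`.
  let φ : V → G.ConnectedComponent := fun x =>
    if G.connectedComponentMk x = G.connectedComponentMk v then G.connectedComponentMk u
    else G.connectedComponentMk x
  have hφ : ∀ a b, (G ⊔ edge u v).Adj a b → φ a = φ b := by
    rintro a b (hab | hab)
    · simp only [φ, ConnectedComponent.eq.mpr hab.reachable]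
    · obtain ⟨⟨rfl, rfl⟩ | ⟨rfl, rfl⟩, -⟩ := (edge_adj ..).mp hab <;> simp [φ]
  have hinj : Set.InjOn f (Set.univ \ {G.connectedComponentMk v}) := by
    rintro c₁ hc₁ c₂ hc₂ hc
    induction c₁ using ConnectedComponent.ind with | h x => ?_
    induction c₂ using ConnectedComponent.ind with | h y => ?_
    rw [hf, hf, ConnectedComponent.eq] at hc
    have := hc.eq_of_forall_adj φ hφ
    simp only [Set.mem_sdiff, Set.mem_singleton_iff, ConnectedComponent.eq] at hc₁ hc₂
    simpa [φ, hc₁.2, hc₂.2] using this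
  have himage : f '' (Set.univ \ {G.connectedComponentMk v}) = Set.univ := by
    refine Set.eq_univ_of_forall fun c => ?_
    obtain ⟨d, rfl⟩ := ConnectedComponent.surjective_map_ofLE le_sup_left c
    by_cases hd : d = G.connectedComponentMk v
    · refine ⟨G.connectedComponentMk u, ⟨trivial, fun hu => h (ConnectedComponent.eq.mp hu)⟩, ?_⟩
      subst hd
      exact ConnectedComponent.eq.mpr (Adj.reachable (by simp [edge_adj, huv]))
    · exact ⟨d, ⟨trivial, hd⟩, rfl⟩
  rw [← Set.ncard_univ, ← himage, hinj.ncard_image,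
    Set.ncard_sdiff_singleton_add_one (Set.mem_univ _), Set.ncard_univ]

lemma natCard_connectedComponent_bot :
    Nat.card (⊥ : SimpleGraph V).ConnectedComponent = Nat.card V :=
  (Nat.card_eq_of_bijective _ ⟨fun _ _ h => reachable_bot.mp (ConnectedComponent.eq.mp h),
    fun c => c.exists_rep⟩).symm

lemma IsAcyclic.natCard_connectedComponent_fromEdgeSet_add_card [Finite V] (hG : G.IsAcyclic)
    {A : Finset (Sym2 V)} (hA : (A : Set (Sym2 V)) ⊆ G.edgeSet) :
    Nat.card (fromEdgeSet (A : Set (Sym2 V))).ConnectedComponent + #A = Nat.card V := by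
  classical
  induction A using Finset.induction_on with
  | empty => simp [natCard_connectedComponent_bot]
  | insert e A he ih =>
    induction e using Sym2.ind with | h u v => ?_
    rw [coe_insert, Set.insert_subset_iff] at hA
    have hnr : ¬ (fromEdgeSet (A : Set (Sym2 V))).Reachable u v := by
      refine fun hr => isBridge_iff.mp (isAcyclic_iff_forall_adj_isBridge.mp hG hA.1) ?_
      refine hr.mono fun x y hxy => ?_
      rw [fromEdgeSet_adj] at hxy
      exact (deleteEdges_adj ..).mpr
        ⟨hA.2 hxy.1, fun h => he (Set.mem_singleton_iff.mp h ▸ hxy.1)⟩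
    have hsup : fromEdgeSet (insert s(u, v) (A : Set (Sym2 V))) =
        fromEdgeSet (A : Set (Sym2 V)) ⊔ edge u v := by
      rw [Set.insert_eq, fromEdgeSet_union, sup_comm, edge]
    rw [coe_insert, hsup, card_insert_of_notMem he, ← ih hA.2,
      ← natCard_connectedComponent_sup_edge hnr]
    ring

lemma isIsolated_fromEdgeSet_iff {s : Set (Sym2 V)} (hs : s ⊆ G.edgeSet) :
    (fromEdgeSet s).IsIsolated v ↔ ∀ e ∈ s, v ∉ e := by
  refine ⟨fun h e he hve => ?_,
    fun h w hw => h _ ((fromEdgeSet_adj _).mp hw).1 (Sym2.mem_mk_left v w)⟩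
  obtain ⟨w, rfl⟩ := Sym2.mem_iff_exists.mp hve
  exact h w ((fromEdgeSet_adj _).mpr ⟨he, (G.mem_edgeSet.mp (hs he)).ne⟩)

open Classical in
lemma card_filter_isIsolated_fromEdgeSet [Fintype V] [DecidableEq V] [DecidableRel G.Adj]
    (v : V) (k : ℕ) :
    #((G.edgeFinset.powersetCard k).filter fun A : Finset (Sym2 V) =>
        (fromEdgeSet (A : Set (Sym2 V))).IsIsolated v) =
      (#G.edgeFinset - G.degree v).choose k := by
  have : (G.edgeFinset.powersetCard k).filter (fun A : Finset (Sym2 V) =>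
      (fromEdgeSet (A : Set (Sym2 V))).IsIsolated v) =
      (G.edgeFinset \ G.incidenceFinset v).powersetCard k := by
    ext A
    simp only [mem_filter, mem_powersetCard, subset_sdiff]
    refine ⟨fun ⟨⟨hAE, hk⟩, hiso⟩ => ⟨⟨hAE, ?_⟩, hk⟩, fun ⟨⟨hAE, hdisj⟩, hk⟩ => ⟨⟨hAE, hk⟩, ?_⟩⟩
    all_goals have hA : (A : Set (Sym2 V)) ⊆ G.edgeSet := fun e he => mem_edgeFinset.mp (hAE he)
    · rw [isIsolated_fromEdgeSet_iff hA] at hiso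
      exact Finset.disjoint_left.mpr fun e he hI => hiso e he ((mem_incidenceFinset _ _ _).mp hI).2
    · rw [isIsolated_fromEdgeSet_iff hA]
      exact fun e he hve =>
        Finset.disjoint_left.mp hdisj he ((mem_incidenceFinset _ _ _).mpr ⟨hA he, hve⟩)
  rw [this, card_powersetCard, card_sdiff_of_subset (G.incidenceFinset_subset v),
    card_incidenceFinset_eq_degree]

lemma connectedComponentMk_supp_eq_singleton_iff :
    (G.connectedComponentMk v).supp = {v} ↔ G.IsIsolated v := by
  refine ⟨fun h w hvw => hvw.ne ?_, fun h => Set.ext fun w => ?_⟩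
  · have : w ∈ (G.connectedComponentMk v).supp := ConnectedComponent.eq.mpr hvw.reachable.symm
    exact (h ▸ this : w ∈ ({v} : Set V)).symm
  · refine ⟨fun hw => ?_, fun hw => hw ▸ rfl⟩
    by_contra hne
    have := mem_support_of_reachable (Ne.symm hne) (ConnectedComponent.eq.mp hw).symm
    exact (mem_support_iff_not_isIsolated _).mp this h

lemma ConnectedComponent.ncard_supp_eq_one_iff (c : G.ConnectedComponent) :
    c.supp.ncard = 1 ↔ ∃ v, G.IsIsolated v ∧ G.connectedComponentMk v = c := by
  refine ⟨fun h => ?_, fun ⟨v, hv, hvc⟩ => ?_⟩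
  · obtain ⟨v, hv⟩ := Set.ncard_eq_one.mp h
    have hvc : G.connectedComponentMk v = c := (c.mem_supp_iff v).mp (hv ▸ rfl)
    exact ⟨v, connectedComponentMk_supp_eq_singleton_iff.mp (hvc ▸ hv), hvc⟩
  · rw [← hvc, connectedComponentMk_supp_eq_singleton_iff.mpr hv, Set.ncard_singleton]

lemma card_filter_degree_eq_tsub [Fintype V] [DecidableRel G.Adj] {n j : ℕ}
    (hn : Fintype.card V = n) (hj : j < n) :
    #{v | G.degree v = j} = #{v | n - 1 - G.degree v = n - 1 - j} := by
  refine congrArg card (filter_congr fun v _ => ?_)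
  have := G.degree_lt_card_verts v
  omega

lemma card_filter_degree_eq_zero [Fintype V] [DecidableRel G.Adj] {n j : ℕ}
    (hn : Fintype.card V = n) (hj : n ≤ j) : #{v | G.degree v = j} = 0 :=
  card_eq_zero.mpr <| filter_eq_empty_iff.mpr fun v _ => by
    have := G.degree_lt_card_verts v
    omega

end SimpleGraph

section edgeSetType

variable [Fintype V] (A : Finset (Sym2 V))

lemma card_edgeSetType :
    Multiset.card (edgeSetType A) =
      Nat.card (fromEdgeSet (A : Set (Sym2 V))).ConnectedComponent := by
  classical
  rw [edgeSetType, Multiset.card_map, ← Finset.card_def,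
    image_univ_of_surjective fun c => c.exists_rep, card_univ, Nat.card_eq_fintype_card]

lemma sum_edgeSetType : (edgeSetType A).sum = Fintype.card V := by
  classical
  set H := fromEdgeSet (A : Set (Sym2 V))
  change ∑ c ∈ univ.image H.connectedComponentMk, c.supp.ncard = _
  rw [← card_univ, card_eq_sum_card_image H.connectedComponentMk]
  refine sum_congr rfl fun c _ => ?_
  rw [← Set.ncard_coe_finset, coe_filter]
  congr 1
  ext v
  simp [ConnectedComponent.mem_supp_iff]

lemma pos_of_mem_edgeSetType {m : ℕ} (hm : m ∈ edgeSetType A) : 0 < m := by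
  obtain ⟨c, -, rfl⟩ := Multiset.mem_map.mp hm
  exact (Set.ncard_pos (Set.toFinite _)).mpr c.nonempty_supp

open Classical in
lemma count_one_edgeSetType :
    (edgeSetType A).count 1 = #{v | (fromEdgeSet (A : Set (Sym2 V))).IsIsolated v} := by
  set H := fromEdgeSet (A : Set (Sym2 V))
  rw [edgeSetType, Multiset.count_map, ← filter_val, ← card_def]
  symm
  refine card_nbij H.connectedComponentMk (fun v hv => ?_) (fun v hv w _ hvw => ?_) fun c hc => ?_
  · have hv : H.IsIsolated v := by simpa using hv
    simpa using ⟨⟨v, rfl⟩, ((ConnectedComponent.ncard_supp_eq_one_iff _).mpr ⟨v, hv, rfl⟩).symm⟩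
  · simp only [coe_filter, mem_univ, true_and, Set.mem_ofPred_eq] at hv
    have hw : w ∈ (H.connectedComponentMk v).supp := hvw.symm
    rwa [connectedComponentMk_supp_eq_singleton_iff.mpr hv, Set.mem_singleton_iff, eq_comm] at hw
  · simp only [coe_filter, Set.mem_ofPred_eq] at hc
    obtain ⟨v, hv, rfl⟩ := (ConnectedComponent.ncard_supp_eq_one_iff c).mp hc.2.symm
    exact ⟨v, by simpa using hv, rfl⟩

end edgeSetType

variable {G : SimpleGraph V}

lemma NCoeff_eq_card_filter [Fintype V] [DecidableEq V] [DecidableRel G.Adj] (lam : Multiset ℕ) :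
    NCoeff G lam = #{A ∈ G.edgeFinset.powerset | edgeSetType A = lam} := by
  rw [NCoeff]
  congr 1
  ext A
  simp [← coe_edgeFinset]

lemma sum_edgeSetType_eq_sum_partition [Fintype V] [DecidableEq V] [DecidableRel G.Adj]
    {M : Type*} [AddCommMonoid M] {n : ℕ} (hn : Fintype.card V = n) (F : Multiset ℕ → M) :
    ∑ A ∈ G.edgeFinset.powerset, F (edgeSetType A) =
      ∑ p : n.Partition, NCoeff G p.parts • F p.parts := by
  let toPartition (A : Finset (Sym2 V)) : n.Partition :=
    ⟨edgeSetType A, pos_of_mem_edgeSetType A, (sum_edgeSetType A).trans hn⟩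
  rw [← sum_fiberwise _ toPartition]
  refine sum_congr rfl fun p _ => ?_
  rw [NCoeff_eq_card_filter, ← sum_const]
  refine sum_congr (filter_congr fun A _ => Nat.Partition.ext_iff) fun A hA => ?_
  rw [(mem_filter.mp hA).2]

open Classical in
lemma SimpleGraph.IsAcyclic.sum_count_one_edgeSetType [Fintype V] [DecidableEq V]
    [DecidableRel G.Adj] (hG : G.IsAcyclic) (k : ℕ) :
    ∑ A ∈ G.edgeFinset.powerset,
        (if Multiset.card (edgeSetType A) + k = Fintype.card V then (edgeSetType A).count 1
          else 0) =
      ∑ v, (#G.edgeFinset - G.degree v).choose k := by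
  calc _ = ∑ A ∈ G.edgeFinset.powersetCard k,
          #{v | (fromEdgeSet (A : Set (Sym2 V))).IsIsolated v} := by
        rw [powersetCard_eq_filter, sum_filter]
        refine sum_congr rfl fun A hA => ?_
        have hA : (A : Set (Sym2 V)) ⊆ G.edgeSet := by
          simpa [← coe_edgeFinset] using mem_powerset.mp hA
        have := hG.natCard_connectedComponent_fromEdgeSet_add_card hA
        rw [Nat.card_eq_fintype_card (α := V)] at this
        rw [card_edgeSetType, count_one_edgeSetType]
        exact if_congr (by omega) rfl rfl
    _ = ∑ v, #((G.edgeFinset.powersetCard k).filter fun A : Finset (Sym2 V) =>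
          (fromEdgeSet (A : Set (Sym2 V))).IsIsolated v) := by
        simp only [card_filter]
        exact sum_comm
    _ = _ := sum_congr rfl fun v _ => card_filter_isIsolated_fromEdgeSet v k

/-- Let `T` and `U` be trees, each with `n` vertices, with `N_λ(T) = N_λ(U)` for every
partition `λ` of `n` (equivalently, `X_T = X_U`).  Then `T` and `U` have the same degree
sequence: for every `j`, they have the same number of vertices of degree `j`. -/
theorem stmt_12 [Fintype V] [Fintype W] (T : SimpleGraph V) (U : SimpleGraph W)
    [DecidableRel T.Adj] [DecidableRel U.Adj]
    (hT : T.IsTree) (hU : U.IsTree) (n : ℕ)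
    (hVn : Fintype.card V = n) (hWn : Fintype.card W = n)
    (hN : ∀ lam : Multiset ℕ, lam.sum = n → (∀ m ∈ lam, 0 < m) →
      NCoeff T lam = NCoeff U lam) :
    ∀ j : ℕ, (Finset.univ.filter (fun v : V => T.degree v = j)).card =
      (Finset.univ.filter (fun w : W => U.degree w = j)).card := by
  classical
  have hchoose : ∀ k, ∑ v, (n - 1 - T.degree v).choose k = ∑ w, (n - 1 - U.degree w).choose k := by
    intro k
    have hTE : #T.edgeFinset = n - 1 := by have := hT.card_edgeFinset; omega
    have hUE : #U.edgeFinset = n - 1 := by have := hU.card_edgeFinset; omega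
    have hTk := hT.isAcyclic.sum_count_one_edgeSetType k
    have hUk := hU.isAcyclic.sum_count_one_edgeSetType k
    rw [hTE, hVn] at hTk
    rw [hUE, hWn] at hUk
    let F (lam : Multiset ℕ) : ℕ := if Multiset.card lam + k = n then lam.count 1 else 0
    rw [← hTk, ← hUk]
    change ∑ A ∈ _, F (edgeSetType A) = ∑ A ∈ _, F (edgeSetType A)
    rw [sum_edgeSetType_eq_sum_partition hVn, sum_edgeSetType_eq_sum_partition hWn]
    exact sum_congr rfl fun p _ => by rw [hN p.parts p.parts_sum fun _ => p.parts_pos]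
  intro j
  rcases lt_or_ge j n with hj | hj
  · rw [card_filter_degree_eq_tsub hVn hj, card_filter_degree_eq_tsub hWn hj]
    exact card_filter_eq_of_sum_choose_eq _ _ hchoose _
  · rw [card_filter_degree_eq_zero hVn hj, card_filter_degree_eq_zero hWn hj]
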